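/- arXiv:2501.10795 — 8 statements merged into one kernel-verified Lean document; each statement's English description precedes it below -/
import Mathlib

section
/- A unit circle centered at E = (x_E, y_E) and the parabola y² = 2px + p² (p ≠ 0, focus at the origin) form a 3-Poncelet pair (Cayley condition A₂ = 0) if and only if x_E² + y_E² = 1, i.e., if and only if the focus (0,0) lies on the circle. In particular, the condition is independent of p, so the whole confocal family of parabolas is 3-isoperiodic with the circle. -/
/-!
If `y ^ 2 = f` then comparing the coefficients of `X⁰, X¹, X²` gives
`8 f₀ y₀ y₂ = 4 f₀ f₂ - f₁ ^ 2`. For the cubic `det (λ D + P)` of the circle and the parabola the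
right-hand side is `-4 p² (x_E² + y_E² - 1)`, while `y₀ ^ 2 = f₀ = -p² ≠ 0`; hence
`2 y₀ y₂ = x_E² + y_E² - 1` with `y₀ ≠ 0`.
-/

namespace PowerSeries

variable {R : Type*} [CommRing R]

theorem coeff_zero_sq (y : R⟦X⟧) : coeff 0 (y ^ 2) = coeff 0 y ^ 2 := by
  simp [sq, coeff_mul]

theorem coeff_one_sq (y : R⟦X⟧) : coeff 1 (y ^ 2) = 2 * coeff 0 y * coeff 1 y := by
  rw [sq, coeff_mul, Finset.Nat.sum_antidiagonal_eq_sum_range_succ_mk]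
  simp only [Finset.sum_range_succ, Finset.sum_range_zero]
  ring

theorem coeff_two_sq (y : R⟦X⟧) :
    coeff 2 (y ^ 2) = 2 * coeff 0 y * coeff 2 y + coeff 1 y ^ 2 := by
  rw [sq, coeff_mul, Finset.Nat.sum_antidiagonal_eq_sum_range_succ_mk]
  simp only [Finset.sum_range_succ, Finset.sum_range_zero]
  ring

theorem eight_mul_coeff_zero_mul_coeff_two_of_sq_eq {f y : R⟦X⟧} (h : y ^ 2 = f) :
    8 * coeff 0 f * (coeff 0 y * coeff 2 y) = 4 * coeff 0 f * coeff 2 f - coeff 1 f ^ 2 := by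
  subst h
  rw [coeff_zero_sq, coeff_one_sq, coeff_two_sq]
  ring

section Cubic

variable (c₀ c₁ c₂ c₃ : R)

theorem coeff_zero_cubic : coeff 0 (C c₀ + C c₁ * X + C c₂ * X ^ 2 + C c₃ * X ^ 3) = c₀ := by
  simp

theorem coeff_one_cubic : coeff 1 (C c₀ + C c₁ * X + C c₂ * X ^ 2 + C c₃ * X ^ 3) = c₁ := by
  simp [coeff_X_pow]

theorem coeff_two_cubic : coeff 2 (C c₀ + C c₁ * X + C c₂ * X ^ 2 + C c₃ * X ^ 3) = c₂ := by
  simp [coeff_X_pow]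

end Cubic

end PowerSeries

open PowerSeries

theorem stmt6_general (xE yE p : ℝ) (hp : p ≠ 0)
    (y : PowerSeries ℂ)
    (hy : y ^ 2 = PowerSeries.C ((-p ^ 2 : ℝ) : ℂ)
      + PowerSeries.C ((-2 * p ^ 2 - 2 * p * xE : ℝ) : ℂ) * PowerSeries.X
      + PowerSeries.C ((-p ^ 2 - 2 * p * xE + yE ^ 2 - 1 : ℝ) : ℂ) * PowerSeries.X ^ 2
      + PowerSeries.C ((-1 : ℝ) : ℂ) * PowerSeries.X ^ 3) :
    PowerSeries.coeff 2 y = 0 ↔ (0 - xE) ^ 2 + (0 - yE) ^ 2 = 1 := by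
  have hp' : (p : ℂ) ≠ 0 := by exact_mod_cast hp
  have hy₀_sq : coeff 0 y ^ 2 = -(p : ℂ) ^ 2 := by
    rw [← coeff_zero_sq, hy, coeff_zero_cubic]
    push_cast
    ring
  have hy₀ : coeff 0 y ≠ 0 := by
    intro h
    simp [h, hp'] at hy₀_sq
  have key := eight_mul_coeff_zero_mul_coeff_two_of_sq_eq hy
  rw [coeff_zero_cubic, coeff_one_cubic, coeff_two_cubic] at key
  have hcenter : 2 * coeff 0 y * coeff 2 y = ((xE ^ 2 + yE ^ 2 - 1 : ℝ) : ℂ) := by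
    apply mul_left_cancel₀ (mul_ne_zero (by norm_num : (-4 : ℂ) ≠ 0) (pow_ne_zero 2 hp'))
    push_cast at key ⊢
    linear_combination key
  rw [← mul_eq_zero_iff_left (mul_ne_zero two_ne_zero hy₀), hcenter, Complex.ofReal_eq_zero]
  constructor <;> intro h <;> linarith

/-- the unit circle centered at `E = (x_E,y_E)` and the parabola
`y² = 2px + p²` (`p ≠ 0`, focus at the origin) form a 3-Poncelet pair (Cayley
condition `A₂ = 0`) if and only if the focus `(0,0)` lies on the circle, i.e.
`(0−x_E)² + (0−y_E)² = 1`.  Since `p` is arbitrary, the condition is independent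
of `p`: the whole confocal family is 3-isoperiodic with the circle. -/
theorem stmt6 (xE yE p : ℝ) (hp : p ≠ 0) (A₀ : ℂ) (hA₀ : A₀ ^ 2 = -(p : ℂ) ^ 2)
    (y : PowerSeries ℂ)
    (hy : y ^ 2 = PowerSeries.C ((-p ^ 2 : ℝ) : ℂ)
      + PowerSeries.C ((-2 * p ^ 2 - 2 * p * xE : ℝ) : ℂ) * PowerSeries.X
      + PowerSeries.C ((-p ^ 2 - 2 * p * xE + yE ^ 2 - 1 : ℝ) : ℂ) * PowerSeries.X ^ 2
      + PowerSeries.C ((-1 : ℝ) : ℂ) * PowerSeries.X ^ 3)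
    (h0 : PowerSeries.coeff 0 y = A₀) :
    PowerSeries.coeff 2 y = 0 ↔ (0 - xE) ^ 2 + (0 - yE) ^ 2 = 1 :=
  stmt6_general xE yE p hp y hy
end

section
/- The polynomial Q⁴₁(x,y,p) = (x²+y²)p + x(x²+y²−1), viewed as a polynomial in p over ℝ, is the zero polynomial if and only if (x,y) = (0,0). Hence the confocal family of parabolas is 4-isoperiodic with the unit circle centered at E if and only if E coincides with the focus (0,0). -/
/-- `Q⁴₁(x,y,p) = (x²+y²)p + x(x²+y²−1)` vanishes for all nonzero real `p`
iff `(x,y) = (0,0)`: the confocal family of parabolas is 4-isoperiodic with the unit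
circle centered at `E` iff `E` is the focus `(0,0)`. -/
theorem stmt9 (x y : ℝ) :
    (∀ p : ℝ, p ≠ 0 → (x ^ 2 + y ^ 2) * p + x * (x ^ 2 + y ^ 2 - 1) = 0) ↔
      (x = 0 ∧ y = 0) := by
  constructor
  · intro h
    have h1 := h 1 one_ne_zero
    have h2 := h 2 two_ne_zero
    have hs : x ^ 2 + y ^ 2 = 0 := by nlinarith
    constructor
    · nlinarith [sq_nonneg x, sq_nonneg y]
    · nlinarith [sq_nonneg x, sq_nonneg y]
  · rintro ⟨rfl, rfl⟩ p _
    ring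
end

section
/- For every (x,y) ∈ ℝ² with (x,y) ∉ S¹ ∪ {(0,0)}, the polynomial Q⁵₂(x,y,p) = 4(x²+y²)p² + 4x(x²+y²−1)p − (x²+y²−1)³ is a nonzero polynomial of degree 2 in p; hence it has at most two real roots and is not identically zero. Consequently, a confocal family of parabolas is never 5-isoperiodic with a unit circle. -/
/-- off `S¹ ∪ {(0,0)}`, the polynomial
`Q⁵₂(x,y,p) = 4(x²+y²)p² + 4x(x²+y²−1)p − (x²+y²−1)³` in `p` is nonzero of degree 2,
has at most two real roots, and is not identically zero on nonzero `p`; hence a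
confocal family of parabolas is never 5-isoperiodic with a unit circle. -/
theorem stmt11 (x y : ℝ) (h1 : x ^ 2 + y ^ 2 ≠ 1) (h2 : ¬(x = 0 ∧ y = 0)) :
    (Polynomial.C (4 * (x ^ 2 + y ^ 2)) * Polynomial.X ^ 2
        + Polynomial.C (4 * x * (x ^ 2 + y ^ 2 - 1)) * Polynomial.X
        - Polynomial.C ((x ^ 2 + y ^ 2 - 1) ^ 3) : Polynomial ℝ) ≠ 0 ∧
    (Polynomial.C (4 * (x ^ 2 + y ^ 2)) * Polynomial.X ^ 2
        + Polynomial.C (4 * x * (x ^ 2 + y ^ 2 - 1)) * Polynomial.X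
        - Polynomial.C ((x ^ 2 + y ^ 2 - 1) ^ 3) : Polynomial ℝ).degree = 2 ∧
    (∃ a b : ℝ, {p : ℝ | 4 * (x ^ 2 + y ^ 2) * p ^ 2
        + 4 * x * (x ^ 2 + y ^ 2 - 1) * p - (x ^ 2 + y ^ 2 - 1) ^ 3 = 0} ⊆ {a, b}) ∧
    ¬(∀ p : ℝ, p ≠ 0 → 4 * (x ^ 2 + y ^ 2) * p ^ 2
        + 4 * x * (x ^ 2 + y ^ 2 - 1) * p - (x ^ 2 + y ^ 2 - 1) ^ 3 = 0) := by
  have hxy : (0:ℝ) < x ^ 2 + y ^ 2 := by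
    rcases not_and_or.mp h2 with h | h
    · positivity
    · positivity
  have ha : (4 * (x ^ 2 + y ^ 2) : ℝ) ≠ 0 := by positivity
  have hdeg : (Polynomial.C (4 * (x ^ 2 + y ^ 2)) * Polynomial.X ^ 2
        + Polynomial.C (4 * x * (x ^ 2 + y ^ 2 - 1)) * Polynomial.X
        - Polynomial.C ((x ^ 2 + y ^ 2 - 1) ^ 3) : Polynomial ℝ).degree = 2 := by
    rw [sub_eq_add_neg, ← Polynomial.C_neg]
    exact Polynomial.degree_quadratic ha
  refine ⟨?_, hdeg, ?_, ?_⟩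
  · intro h0
    rw [h0] at hdeg
    simp at hdeg
  · set A := 4 * (x ^ 2 + y ^ 2)
    set B := 4 * x * (x ^ 2 + y ^ 2 - 1)
    set C := -((x ^ 2 + y ^ 2 - 1) ^ 3)
    by_cases hd : 0 ≤ discrim A B C
    · refine ⟨(-B + Real.sqrt (discrim A B C)) / (2 * A),
        (-B - Real.sqrt (discrim A B C)) / (2 * A), fun p hp => ?_⟩
      have hs : discrim A B C = Real.sqrt (discrim A B C) * Real.sqrt (discrim A B C) :=
        (Real.mul_self_sqrt hd).symm
      have := (quadratic_eq_zero_iff ha hs p).mp (by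
        have : A * p ^ 2 + B * p + C = 0 := by
          simp only [Set.mem_setOf_eq] at hp; simp only [C]; linarith
        linarith [this, sq p] )
      simpa using this
    · refine ⟨0, 0, fun p hp => ?_⟩
      exfalso
      have hne : ∀ s : ℝ, discrim A B C ≠ s ^ 2 := by
        intro s hs
        exact hd (hs ▸ sq_nonneg s)
      refine quadratic_ne_zero_of_discrim_ne_sq hne p ?_
      simp only [Set.mem_setOf_eq] at hp
      simp only [C]; nlinarith [sq p]
  · intro h
    have h1 := h 1 one_ne_zero
    have h2' := h (-1) (by norm_num)
    have h3 := h 2 two_ne_zero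
    nlinarith [h1, h2', h3, hxy]
end

section
/- If 0 < y < 1 and x² + (y − 1/2)² = 1/4 with (x,y) ≠ (0,0), (0,1) (i.e., x² + y² = y), then the quadratic Q⁵₂(x,y,p) = 4(x²+y²)p² + 4x(x²+y²−1)p − (x²+y²−1)³ in p has a double real root p = √y·(1−y)^{3/2}/(2y) when x > 0 is determined by x² = y − y², and in general its discriminant vanishes exactly on the curves x² + y² = ±y. -/
/-! On the circle `x² + y² = y` one has `x² = y (1 - y)`, which turns
`Q⁵₂(x, y, p) = 4y p² - 4x (1 - y) p + (1 - y)³` into `4y (p - x (1 - y) / (2y))²`;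
for `x > 0` the root is `x (1 - y) / (2y)` with `x = √y √(1 - y)`.
Writing `r = x² + y²`, the discriminant is `16 (r - 1)² (x² + r² - r) = 16 (r - 1)² (r² - y²)`,
so off the unit circle it vanishes exactly when `r = ± y`. -/

lemma poncelet5_discrim_eq (x y : ℝ) :
    (4 * x * (x ^ 2 + y ^ 2 - 1)) ^ 2 - 4 * (4 * (x ^ 2 + y ^ 2)) * (-(x ^ 2 + y ^ 2 - 1) ^ 3)
      = 16 * (x ^ 2 + y ^ 2 - 1) ^ 2 * ((x ^ 2 + y ^ 2 - y) * (x ^ 2 + y ^ 2 + y)) := by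
  ring

lemma poncelet5_eq_sq_of_circle {x y : ℝ} (hy : y ≠ 0) (hcirc : x ^ 2 + y ^ 2 = y) (p : ℝ) :
    4 * (x ^ 2 + y ^ 2) * p ^ 2 + 4 * x * (x ^ 2 + y ^ 2 - 1) * p - (x ^ 2 + y ^ 2 - 1) ^ 3
      = 4 * (x ^ 2 + y ^ 2) * (p - x * (1 - y) / (2 * y)) ^ 2 := by
  rw [hcirc]
  field_simp
  linear_combination (-4 * (1 - y) ^ 2) * hcirc

lemma eq_sqrt_mul_sqrt_of_sq_eq {x y : ℝ} (hx : 0 ≤ x) (hy : 0 ≤ y) (hxy : x ^ 2 = y * (1 - y)) :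
    x = √y * √(1 - y) := by
  rw [← Real.sqrt_mul hy, ← hxy, Real.sqrt_sq hx]

/-- on the circle `x²+y² = y` with `0 < y < 1` and `x > 0`
(so `x² = y − y²`), the quadratic `Q⁵₂(x,y,·)` has the double real root
`p₀ = √y·(1−y)^{3/2}/(2y)`, i.e. `Q⁵₂(x,y,p) = 4(x²+y²)(p−p₀)²`;
and (off `S¹`) the discriminant vanishes exactly on the curves `x²+y² = ±y`. -/
theorem stmt12 :
    (∀ x y : ℝ, 0 < y → y < 1 → 0 < x → x ^ 2 + y ^ 2 = y →
      ∀ p : ℝ,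
        4 * (x ^ 2 + y ^ 2) * p ^ 2 + 4 * x * (x ^ 2 + y ^ 2 - 1) * p
            - (x ^ 2 + y ^ 2 - 1) ^ 3
          = 4 * (x ^ 2 + y ^ 2)
            * (p - Real.sqrt y * ((1 - y) * Real.sqrt (1 - y)) / (2 * y)) ^ 2) ∧
    (∀ x y : ℝ, x ^ 2 + y ^ 2 ≠ 1 →
      ((4 * x * (x ^ 2 + y ^ 2 - 1)) ^ 2
          - 4 * (4 * (x ^ 2 + y ^ 2)) * (-(x ^ 2 + y ^ 2 - 1) ^ 3) = 0 ↔
        (x ^ 2 + y ^ 2 = y ∨ x ^ 2 + y ^ 2 = -y))) := by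
  constructor
  · intro x y hy _ hx hcirc p
    have hroot : √y * ((1 - y) * √(1 - y)) = x * (1 - y) := by
      rw [eq_sqrt_mul_sqrt_of_sq_eq hx.le hy.le (by linear_combination hcirc)]
      ring
    rw [hroot, poncelet5_eq_sq_of_circle hy.ne' hcirc]
  · intro x y hr
    have hr' : x ^ 2 + y ^ 2 - 1 ≠ 0 := sub_ne_zero.mpr hr
    simp only [poncelet5_discrim_eq, mul_eq_zero, pow_eq_zero_iff two_ne_zero, hr', sub_eq_zero,
      add_eq_zero_iff_eq_neg, OfNat.ofNat_ne_zero, false_or]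
end

section
/- For every (x,y) ∈ ℝ² with (x,y) ∉ S¹ ∪ {(0,0)}, the leading coefficient 4(x²+y²)(x²+y²+1) of Q⁶₂(x,y,·) is strictly positive; hence Q⁶₂(x,y,·) is a quadratic polynomial in p with at most two real roots, and a confocal family of parabolas is never 6-isoperiodic with a unit circle. -/
/-- off `S¹ ∪ {(0,0)}`, the leading coefficient
`4(x²+y²)(x²+y²+1)` of `Q⁶₂(x,y,·)` is positive; hence the quadratic has at most two
real roots and a confocal family of parabolas is never 6-isoperiodic with a unit
circle. -/
theorem stmt14 (x y : ℝ) (h1 : x ^ 2 + y ^ 2 ≠ 1) (h2 : ¬(x = 0 ∧ y = 0)) :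
    0 < 4 * (x ^ 2 + y ^ 2) * (x ^ 2 + y ^ 2 + 1) ∧
    (∃ a b : ℝ, {p : ℝ |
        4 * (x ^ 2 + y ^ 2) * (x ^ 2 + y ^ 2 + 1) * p ^ 2
          + 4 * x * (2 * x ^ 2 + 2 * y ^ 2 + 1) * (x ^ 2 + y ^ 2 - 1) * p
          + (3 * x ^ 2 - y ^ 2 + 1) * (x ^ 2 + y ^ 2 - 1) ^ 2 = 0} ⊆ {a, b}) ∧
    ¬(∀ p : ℝ, p ≠ 0 →
        4 * (x ^ 2 + y ^ 2) * (x ^ 2 + y ^ 2 + 1) * p ^ 2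
          + 4 * x * (2 * x ^ 2 + 2 * y ^ 2 + 1) * (x ^ 2 + y ^ 2 - 1) * p
          + (3 * x ^ 2 - y ^ 2 + 1) * (x ^ 2 + y ^ 2 - 1) ^ 2 = 0) := by
  have hs : 0 < x ^ 2 + y ^ 2 := by
    rcases not_and_or.mp h2 with hx | hy
    · positivity
    · positivity
  have hA : 0 < 4 * (x ^ 2 + y ^ 2) * (x ^ 2 + y ^ 2 + 1) := by positivity
  set A := 4 * (x ^ 2 + y ^ 2) * (x ^ 2 + y ^ 2 + 1) with hAdef
  set B := 4 * x * (2 * x ^ 2 + 2 * y ^ 2 + 1) * (x ^ 2 + y ^ 2 - 1) with hBdef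
  set C := (3 * x ^ 2 - y ^ 2 + 1) * (x ^ 2 + y ^ 2 - 1) ^ 2 with hCdef
  have hAne : A ≠ 0 := ne_of_gt hA
  have htwo : ∃ a b : ℝ, {p : ℝ | A * p ^ 2 + B * p + C = 0} ⊆ {a, b} := by
    rcases le_or_gt 0 (discrim A B C) with hd | hd
    · obtain ⟨s, hs'⟩ : ∃ s : ℝ, discrim A B C = s * s :=
        ⟨Real.sqrt (discrim A B C), (Real.mul_self_sqrt hd).symm⟩
      refine ⟨(-B + s) / (2 * A), (-B - s) / (2 * A), fun p hp => ?_⟩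
      have hp' : A * (p * p) + B * p + C = 0 := by
        have : p ^ 2 = p * p := sq p
        simpa [this] using hp
      have := (quadratic_eq_zero_iff hAne hs' p).mp hp'
      simpa [Set.mem_insert_iff] using this
    · refine ⟨0, 0, fun p hp => ?_⟩
      have : ∀ s : ℝ, discrim A B C ≠ s ^ 2 := by
        intro s h
        have : (0:ℝ) ≤ discrim A B C := h ▸ sq_nonneg s
        linarith
      have hp' : A * (p * p) + B * p + C = 0 := by
        have : p ^ 2 = p * p := sq p
        simpa [this] using hp
      exact absurd hp' (quadratic_ne_zero_of_discrim_ne_sq this p)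
  refine ⟨hA, htwo, ?_⟩
  intro hall
  obtain ⟨a, b, hab⟩ := htwo
  have m1 := hab (hall 1 one_ne_zero)
  have m2 := hab (hall 2 two_ne_zero)
  have m3 := hab (hall 3 three_ne_zero)
  simp only [Set.mem_insert_iff, Set.mem_singleton_iff] at m1 m2 m3
  rcases m1 with h | h <;> rcases m2 with h' | h' <;> rcases m3 with h'' | h'' <;>
    linarith
end

section
/- Let y ∈ ℝ with y ≠ 0 and y ≠ ±1. The biquadratic polynomial Q⁷₄(0,y,p) in p has discriminant in p² equal to 16y⁴(y+1)⁶(y−1)⁶(4y²+1) > 0, and the product of its two roots in p² is negative; hence Q⁷₄(0,y,·) has exactly two real roots ±√α (for the unique positive root α of the quadratic in p²) and two purely imaginary roots. In particular Q⁷₄(0,y,·) is not the zero polynomial, so the confocal family of parabolas is not 7-isoperiodic with any unit circle centered on the y-axis minus Σ. -/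
/-- The Cayley 7-Poncelet condition polynomial `Q⁷₄(x,y,p)`. -/
def Q74 (x y p : ℝ) : ℝ :=
  16 * (x ^ 2 + y ^ 2) ^ 3 * p ^ 4
    + 48 * x * (x ^ 2 + y ^ 2) ^ 2 * (x ^ 2 + y ^ 2 - 1) * p ^ 3
    + 4 * (x ^ 2 + y ^ 2) * (x ^ 2 + y ^ 2 - 1) ^ 2 * (13 * x ^ 2 + y ^ 2 - 1) * p ^ 2
    + 4 * x * (x ^ 2 + y ^ 2 - 1) ^ 3 * (5 * x ^ 2 + y ^ 2 - 1) * p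
    - (x ^ 2 + y ^ 2 - 1) ^ 6

/-- A quadratic with positive leading coefficient and negative constant term has a
unique positive root. -/
lemma quad_pos_root (a b c : ℝ) (ha : 0 < a) (hc : c < 0) :
    ∃ α : ℝ, 0 < α ∧ a * α ^ 2 + b * α + c = 0 ∧
      ∀ β : ℝ, 0 < β → a * β ^ 2 + b * β + c = 0 → β = α := by
  have hDpos : 0 < b ^ 2 - 4 * a * c := by nlinarith [sq_nonneg b, mul_pos ha (neg_pos.mpr hc)]
  set s := Real.sqrt (b ^ 2 - 4 * a * c) with hs
  have hs2 : s ^ 2 = b ^ 2 - 4 * a * c := Real.sq_sqrt hDpos.le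
  have hspos : 0 < s := Real.sqrt_pos.mpr hDpos
  have hbs : b < s := by nlinarith [mul_pos ha (neg_pos.mpr hc)]
  refine ⟨(-b + s) / (2 * a), div_pos (by linarith) (by linarith), ?_, ?_⟩
  · have h2a : (2 * a) ≠ 0 := by positivity
    have hdef : 2 * a * ((-b + s) / (2 * a)) = -b + s := by field_simp
    have h4 : 4 * a * (a * ((-b + s) / (2 * a)) ^ 2 + b * ((-b + s) / (2 * a)) + c) = 0 := by
      linear_combination (2 * a * ((-b + s) / (2 * a)) + b + s) * hdef + hs2
    have h4a : (4 : ℝ) * a ≠ 0 := by positivity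
    exact (mul_eq_zero.mp h4).resolve_left h4a
  · intro β hβ hβr
    set α := (-b + s) / (2 * a) with hα
    have hαpos : 0 < α := div_pos (by linarith) (by linarith)
    have hroot : a * α ^ 2 + b * α + c = 0 := by
      have hdef : 2 * a * α = -b + s := by rw [hα]; field_simp
      have h4 : 4 * a * (a * α ^ 2 + b * α + c) = 0 := by
        linear_combination (2 * a * α + b + s) * hdef + hs2
      have h4a : (4 : ℝ) * a ≠ 0 := by positivity
      exact (mul_eq_zero.mp h4).resolve_left h4a
    have hab : 0 < a * α + b := by nlinarith
    have hfac : (β - α) * (a * (β + α) + b) = 0 := by linear_combination hβr - hroot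
    have hpos : 0 < a * (β + α) + b := by nlinarith [mul_pos ha hβ]
    have := (mul_eq_zero.mp hfac).resolve_right (ne_of_gt hpos)
    linarith

/-- for `y ≠ 0`, `y ≠ ±1`, the biquadratic `Q⁷₄(0,y,p)`
(with coefficients `a = 16y⁶`, `b = 4y²(y²−1)³`, `c = −(y²−1)⁶` in `p²`)
has discriminant in `p²` equal to `16y⁴(y+1)⁶(y−1)⁶(4y²+1) > 0`, the product of its
roots in `p²` is negative, it has exactly the two real roots `±√α` for the unique
positive root `α` of the quadratic in `p²`, and it is not identically zero in nonzero
`p`; hence the confocal family is not 7-isoperiodic with such a circle. -/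
theorem stmt17 (y : ℝ) (hy0 : y ≠ 0) (hy1 : y ≠ 1) (hy2 : y ≠ -1) :
    ((4 * y ^ 2 * (y ^ 2 - 1) ^ 3) ^ 2
        - 4 * (16 * (y ^ 2) ^ 3) * (-(y ^ 2 - 1) ^ 6)
      = 16 * y ^ 4 * (y + 1) ^ 6 * (y - 1) ^ 6 * (4 * y ^ 2 + 1)) ∧
    (0 < 16 * y ^ 4 * (y + 1) ^ 6 * (y - 1) ^ 6 * (4 * y ^ 2 + 1)) ∧
    ((-(y ^ 2 - 1) ^ 6) / (16 * (y ^ 2) ^ 3) < 0) ∧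
    (∃ α : ℝ, 0 < α ∧
      16 * (y ^ 2) ^ 3 * α ^ 2 + 4 * y ^ 2 * (y ^ 2 - 1) ^ 3 * α - (y ^ 2 - 1) ^ 6 = 0 ∧
      (∀ β : ℝ, 0 < β →
        16 * (y ^ 2) ^ 3 * β ^ 2 + 4 * y ^ 2 * (y ^ 2 - 1) ^ 3 * β - (y ^ 2 - 1) ^ 6 = 0 →
        β = α) ∧
      (∀ p : ℝ, Q74 0 y p = 0 ↔ p = Real.sqrt α ∨ p = -Real.sqrt α)) ∧
    ¬(∀ p : ℝ, p ≠ 0 → Q74 0 y p = 0) := by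
  have hy2p : 0 < y ^ 2 := by positivity
  have hsub : y ^ 2 - 1 ≠ 0 := by
    intro h
    have : (y - 1) * (y + 1) = 0 := by linear_combination h
    rcases mul_eq_zero.mp this with h' | h'
    · exact hy1 (by linarith)
    · exact hy2 (by linarith)
  have h3 : (y ^ 2 - 1) ^ 3 ≠ 0 := pow_ne_zero _ hsub
  have h32 : 0 < ((y ^ 2 - 1) ^ 3) ^ 2 :=
    lt_of_le_of_ne (sq_nonneg _) (Ne.symm (pow_ne_zero 2 h3))
  have hp6 : 0 < (y ^ 2 - 1) ^ 6 := by nlinarith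
  have ha : 0 < 16 * (y ^ 2) ^ 3 := by positivity
  have hc : -(y ^ 2 - 1) ^ 6 < 0 := by linarith
  obtain ⟨α, hαpos, hroot, huniq⟩ :=
    quad_pos_root (16 * (y ^ 2) ^ 3) (4 * y ^ 2 * (y ^ 2 - 1) ^ 3) (-(y ^ 2 - 1) ^ 6) ha hc
  have hQ : ∀ p : ℝ, Q74 0 y p =
      16 * (y ^ 2) ^ 3 * (p ^ 2) ^ 2 + 4 * y ^ 2 * (y ^ 2 - 1) ^ 3 * p ^ 2
        + -(y ^ 2 - 1) ^ 6 := fun p => by unfold Q74; ring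
  have hiff : ∀ p : ℝ, Q74 0 y p = 0 ↔ p = Real.sqrt α ∨ p = -Real.sqrt α := by
    intro p
    rw [hQ p]
    constructor
    · intro hp
      have hpne : p ≠ 0 := by
        intro h
        rw [h] at hp
        simp at hp
        exact hsub hp
      have hp2 : 0 < p ^ 2 := by positivity
      have := huniq (p ^ 2) hp2 hp
      have habs : |p| = Real.sqrt α := by
        rw [← this, Real.sqrt_sq_eq_abs]
      exact (abs_eq (Real.sqrt_nonneg α)).mp habs
    · rintro (rfl | rfl)
      · rw [Real.sq_sqrt hαpos.le]; exact hroot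
      · rw [neg_sq, Real.sq_sqrt hαpos.le]; exact hroot
  have hdisc : 0 < 16 * y ^ 4 * (y + 1) ^ 6 * (y - 1) ^ 6 * (4 * y ^ 2 + 1) := by
    have h : 0 < 16 * (y ^ 2) ^ 2 * ((y ^ 2 - 1) ^ 3) ^ 2 * (4 * y ^ 2 + 1) :=
      mul_pos (mul_pos (by positivity) h32) (by positivity)
    have e : 16 * (y ^ 2) ^ 2 * ((y ^ 2 - 1) ^ 3) ^ 2 * (4 * y ^ 2 + 1)
        = 16 * y ^ 4 * (y + 1) ^ 6 * (y - 1) ^ 6 * (4 * y ^ 2 + 1) := by ring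
    linarith
  refine ⟨by ring, hdisc, div_neg_of_neg_of_pos hc ha,
    ⟨α, hαpos, by linear_combination hroot,
      fun β hβ hβr => huniq β hβ (by linear_combination hβr), hiff⟩, ?_⟩
  intro H
  have hsq := Real.sqrt_nonneg α
  have h := H (Real.sqrt α + 1) (by positivity)
  rcases (hiff _).mp h with h' | h' <;> linarith
end

section
/- Define, for real p with p(p+4) > 0 and p ≠ 0, x(p) = ((p²+2p−2) + √(p³(p+4)))/(2√(p³(p+4))) and y₀(p) = ((p²+2p) + √(p³(p+4)))/(2√(p³(p+4))). Then dy₀/dx = −p/3, i.e., (dy₀/dp)/(dx/dp) = −p/3 wherever dx/dp ≠ 0. -/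
/-!
With `s(q) = √(q³(q+4))` both coordinates have the shape `(q² + 2q + a + s)/(2s)`, and
`s' = 2q²(q+3)/s`. Using `s² = q⁴ + 4q³` the quotient rule collapses to
`-((a+2)q³ + 3aq²)/s³`, which is `6q²/s³` for `x` (`a = -2`) and `-2q³/s³` for `y₀` (`a = 0`).
-/

open Real

lemma hasDerivAt_sqrt_pow_three_mul {p : ℝ} (hp : 0 < p ^ 3 * (p + 4)) :
    HasDerivAt (fun q : ℝ => √(q ^ 3 * (q + 4))) (2 * p ^ 2 * (p + 3) / √(p ^ 3 * (p + 4))) p := by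
  have hpoly : HasDerivAt (fun q : ℝ => q ^ 3 * (q + 4)) _ p :=
    (hasDerivAt_pow 3 p).mul ((hasDerivAt_id p).add_const 4)
  convert hpoly.sqrt hp.ne' using 1
  simp only [Nat.cast_ofNat]
  field_simp
  ring

lemma hasDerivAt_picard_coordinate (a : ℝ) {p : ℝ} (hp : 0 < p ^ 3 * (p + 4)) :
    HasDerivAt (fun q : ℝ => ((q ^ 2 + 2 * q + a) + √(q ^ 3 * (q + 4))) / (2 * √(q ^ 3 * (q + 4))))
      (-((a + 2) * p ^ 3 + 3 * a * p ^ 2) / √(p ^ 3 * (p + 4)) ^ 3) p := by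
  have hs := hasDerivAt_sqrt_pow_three_mul hp
  have hpoly : HasDerivAt (fun q : ℝ => q ^ 2 + 2 * q + a) _ p :=
    ((hasDerivAt_pow 2 p).add ((hasDerivAt_id p).const_mul 2)).add_const a
  have hpos : 0 < √(p ^ 3 * (p + 4)) := sqrt_pos.mpr hp
  have hquot : HasDerivAt
      (fun q : ℝ => ((q ^ 2 + 2 * q + a) + √(q ^ 3 * (q + 4))) / (2 * √(q ^ 3 * (q + 4)))) _ p :=
    (hpoly.add hs).div (hs.const_mul 2) (by positivity)
  convert hquot using 1
  have hsq : √(p ^ 3 * (p + 4)) ^ 2 = p ^ 3 * (p + 4) := sq_sqrt hp.le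
  simp only [Pi.add_apply, Nat.cast_ofNat, Nat.add_one_sub_one, pow_one, mul_one]
  field_simp
  linear_combination (-(p + 1)) * hsq

theorem stmt18_general (p : ℝ) (h1 : p * (p + 4) > 0) (h2 : p ≠ 0) :
    deriv (fun q : ℝ =>
        ((q ^ 2 + 2 * q) + Real.sqrt (q ^ 3 * (q + 4)))
          / (2 * Real.sqrt (q ^ 3 * (q + 4)))) p
      / deriv (fun q : ℝ =>
        ((q ^ 2 + 2 * q - 2) + Real.sqrt (q ^ 3 * (q + 4)))
          / (2 * Real.sqrt (q ^ 3 * (q + 4)))) p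
      = -p / 3 := by
  have hp : 0 < p ^ 3 * (p + 4) := by
    rw [show p ^ 3 * (p + 4) = p ^ 2 * (p * (p + 4)) by ring]
    exact mul_pos (by positivity) h1
  have hy := hasDerivAt_picard_coordinate 0 hp
  have hx := hasDerivAt_picard_coordinate (-2) hp
  simp only [add_zero] at hy
  simp only [← sub_eq_add_neg] at hx
  have hs : 0 < √(p ^ 3 * (p + 4)) := sqrt_pos.mpr hp
  rw [hy.deriv, hx.deriv]
  field_simp
  ring

/-- with `x(p) = ((p²+2p−2) + √(p³(p+4)))/(2√(p³(p+4)))` and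
`y₀(p) = ((p²+2p) + √(p³(p+4)))/(2√(p³(p+4)))`, one has `dy₀/dx = −p/3`
wherever `dx/dp ≠ 0` (for `p(p+4) > 0`, `p ≠ 0`). -/
theorem stmt18 (p : ℝ) (h1 : p * (p + 4) > 0) (h2 : p ≠ 0)
    (hx : deriv (fun q : ℝ =>
        ((q ^ 2 + 2 * q - 2) + Real.sqrt (q ^ 3 * (q + 4)))
          / (2 * Real.sqrt (q ^ 3 * (q + 4)))) p ≠ 0) :
    deriv (fun q : ℝ =>
        ((q ^ 2 + 2 * q) + Real.sqrt (q ^ 3 * (q + 4)))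
          / (2 * Real.sqrt (q ^ 3 * (q + 4)))) p
      / deriv (fun q : ℝ =>
        ((q ^ 2 + 2 * q - 2) + Real.sqrt (q ^ 3 * (q + 4)))
          / (2 * Real.sqrt (q ^ 3 * (q + 4)))) p
      = -p / 3 :=
  stmt18_general p h1 h2
end

section
/- Define, for real p with p² > 4, x(p) = (p² − 2 + √(p²(p²−4)))/(2√(p²(p²−4))) and y(p) = (p² + √(p²(p²−4)))/(2p²). Then y(p)² − 2x(p)·y(p) + x(p) = 0 for all such p; i.e., the pair (x(p), y(p)) parametrizes the algebraic curve y² − 2xy + x = 0. Moreover, with y₀(p) = (1/2)(1 + p²/√(p²(p²−4))), one has y₀² − 2xy₀ + x = 0 and y = y₀/(2y₀ − 1). -/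
/-! Write `s = √(p²(p²−4))`. Clearing denominators, the relation for `y₀` becomes
`s² = p²(p²−4)`, and `y = y₀/(2y₀−1)` holds because `2y₀ − 1 = p²/s`. For fixed `x` the
involution `y ↦ y/(2y−1)` multiplies `y² − 2xy + x` by `(2y−1)⁻²`, so it preserves the
curve, and the relation for `y` follows from the one for `y₀`. -/

section Curve

variable {K : Type*} [Field K]

theorem curve_at_div_two_mul_sub_one (x y : K) (hy : 2 * y - 1 ≠ 0) :
    (y / (2 * y - 1)) ^ 2 - 2 * x * (y / (2 * y - 1)) + x
      = (y ^ 2 - 2 * x * y + x) / (2 * y - 1) ^ 2 := by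
  -- `field_simp` rewrites the denominator to `y * 2 - 1` before looking for its side condition
  have hy' : y * 2 - 1 ≠ 0 := by rwa [mul_comm]
  field_simp
  ring

variable [NeZero (2 : K)]

theorem two_mul_half_one_add_sub_one (a : K) : 2 * ((1 / 2) * (1 + a)) - 1 = a := by
  field_simp
  ring

theorem isoperiodic_y₀_mem_curve (P s : K) (hs : s ^ 2 = P * (P - 4)) (hs0 : s ≠ 0) :
    ((1 / 2) * (1 + P / s)) ^ 2 - 2 * ((P - 2 + s) / (2 * s)) * ((1 / 2) * (1 + P / s))
      + (P - 2 + s) / (2 * s) = 0 := by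
  field_simp
  linear_combination hs

theorem isoperiodic_y_eq_y₀_div (P s : K) (hP : P ≠ 0) (hs0 : s ≠ 0) :
    (P + s) / (2 * P) = ((1 / 2) * (1 + P / s)) / (2 * ((1 / 2) * (1 + P / s)) - 1) := by
  rw [two_mul_half_one_add_sub_one]
  field_simp
  ring

end Curve

/-- for `p² > 4`, with
`x(p) = (p²−2+√(p²(p²−4)))/(2√(p²(p²−4)))`, `y(p) = (p²+√(p²(p²−4)))/(2p²)` and
`y₀(p) = (1/2)(1 + p²/√(p²(p²−4)))`, one has `y² − 2xy + x = 0`,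
`y₀² − 2xy₀ + x = 0`, and `y = y₀/(2y₀ − 1)`. -/
theorem stmt19 (p : ℝ) (hp : p ^ 2 > 4) :
    ((p ^ 2 + Real.sqrt (p ^ 2 * (p ^ 2 - 4))) / (2 * p ^ 2)) ^ 2
        - 2 * ((p ^ 2 - 2 + Real.sqrt (p ^ 2 * (p ^ 2 - 4)))
            / (2 * Real.sqrt (p ^ 2 * (p ^ 2 - 4))))
          * ((p ^ 2 + Real.sqrt (p ^ 2 * (p ^ 2 - 4))) / (2 * p ^ 2))
        + (p ^ 2 - 2 + Real.sqrt (p ^ 2 * (p ^ 2 - 4)))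
            / (2 * Real.sqrt (p ^ 2 * (p ^ 2 - 4))) = 0 ∧
    ((1 / 2) * (1 + p ^ 2 / Real.sqrt (p ^ 2 * (p ^ 2 - 4)))) ^ 2
        - 2 * ((p ^ 2 - 2 + Real.sqrt (p ^ 2 * (p ^ 2 - 4)))
            / (2 * Real.sqrt (p ^ 2 * (p ^ 2 - 4))))
          * ((1 / 2) * (1 + p ^ 2 / Real.sqrt (p ^ 2 * (p ^ 2 - 4))))
        + (p ^ 2 - 2 + Real.sqrt (p ^ 2 * (p ^ 2 - 4)))
            / (2 * Real.sqrt (p ^ 2 * (p ^ 2 - 4))) = 0 ∧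
    (p ^ 2 + Real.sqrt (p ^ 2 * (p ^ 2 - 4))) / (2 * p ^ 2)
      = ((1 / 2) * (1 + p ^ 2 / Real.sqrt (p ^ 2 * (p ^ 2 - 4))))
        / (2 * ((1 / 2) * (1 + p ^ 2 / Real.sqrt (p ^ 2 * (p ^ 2 - 4)))) - 1) := by
  have hP : 0 < p ^ 2 := by linarith
  have hdisc : 0 < p ^ 2 * (p ^ 2 - 4) := mul_pos hP (by linarith)
  set s := Real.sqrt (p ^ 2 * (p ^ 2 - 4))
  have hs0 : s ≠ 0 := (Real.sqrt_pos.mpr hdisc).ne'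
  have hy₀ := isoperiodic_y₀_mem_curve (p ^ 2) s (Real.sq_sqrt hdisc.le) hs0
  have hy := isoperiodic_y_eq_y₀_div (p ^ 2) s hP.ne' hs0
  have hden : 2 * ((1 / 2) * (1 + p ^ 2 / s)) - 1 ≠ 0 := by
    rw [two_mul_half_one_add_sub_one]
    exact div_ne_zero hP.ne' hs0
  refine ⟨?_, hy₀, hy⟩
  rw [hy, curve_at_div_two_mul_sub_one _ _ hden, hy₀, zero_div]
end
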